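/- arXiv:2601.09485 — 7 statements merged into one kernel-verified Lean document; each statement's English description precedes it below -/
import Mathlib

section
/- Let H ~ Hyp(n,i,k) be a hypergeometric random variable such that E(H) ≤ 1. Then P(H = 1) ≥ P(H ≥ 2). -/
/-- The probability mass function of the hypergeometric distribution `Hyp(n,i,k)`. -/
noncomputable def hypPMF (n i k j : ℕ) : ℝ :=
  ((Nat.choose i j : ℝ) * (Nat.choose (n - i) (k - j) : ℝ)) / (Nat.choose n k : ℝ)

/-- `P(H ≥ t)` for `H ~ Hyp(n,i,k)`. -/
noncomputable def hypTail (n i k : ℕ) (t : ℝ) : ℝ :=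
  ∑ j ∈ Finset.range (k + 1), if t ≤ (j : ℝ) then hypPMF n i k j else 0

/-- Key integer inequality behind the pmf ratio bound. -/
lemma hyp_int_ineq (n i k j : ℤ) (hik : i*k ≤ n) (hj : 1 ≤ j) (hji : j+1 ≤ i) (hjk : j+1 ≤ k) :
    2 * (i - j) * (k - j) ≤ (n - i - (k - j - 1)) * (j+1) := by
  nlinarith [mul_nonneg (by linarith : (0:ℤ) ≤ j-1) (mul_nonneg (by linarith : (0:ℤ) ≤ i-1) (by linarith : (0:ℤ) ≤ k-1)),
    mul_nonneg (by linarith : (0:ℤ) ≤ j-1) (by linarith : (0:ℤ) ≤ i-j),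
    mul_nonneg (by linarith : (0:ℤ) ≤ j-1) (by linarith : (0:ℤ) ≤ k-j),
    mul_nonneg (by linarith : (0:ℤ) ≤ n - i*k) (by linarith : (0:ℤ) ≤ j+1),
    mul_pos (by linarith : (0:ℤ) < j) (by linarith : (0:ℤ) < j)]

/-- Numerator inequality: `2·C(i,j+1)·C(n−i,k−j−1) ≤ C(i,j)·C(n−i,k−j)` when `i·k ≤ n`. -/
lemma hyp_num_ineq (n i k j : ℕ) (hik : i*k ≤ n) (hin : i ≤ n) (hj : 1 ≤ j) (hjk : j+1 ≤ k) :
    2 * Nat.choose i (j+1) * Nat.choose (n-i) (k-(j+1)) ≤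
      Nat.choose i j * Nat.choose (n-i) (k-j) := by
  by_cases hji : j + 1 ≤ i
  · by_cases hml : k - (j+1) ≤ n - i
    · have hl : k - j = (k - (j+1)) + 1 := by omega
      set m := n - i with hm
      set l := k - (j+1) with hldef
      have A : Nat.choose i (j+1) * (j+1) = Nat.choose i j * (i - j) :=
        Nat.choose_succ_right_eq i j
      have B : Nat.choose m (l+1) * (l+1) = Nat.choose m l * (m - l) :=
        Nat.choose_succ_right_eq m l
      have K : 2 * (i - j) * (l + 1) ≤ (m - l) * (j + 1) := by
        have hji' : j ≤ i := by omega
        have hjk' : j ≤ k := by omega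
        zify [hji', hml]
        have : ((l:ℤ)) = k - j - 1 := by
          have : (j:ℤ) + 1 ≤ k := by exact_mod_cast hjk
          simp only [hldef]; push_cast [Nat.cast_sub hjk]; omega
        rw [hm, this]
        push_cast [Nat.cast_sub hin]
        have := hyp_int_ineq n i k j (by exact_mod_cast hik) (by exact_mod_cast hj)
          (by exact_mod_cast hji) (by exact_mod_cast hjk)
        linarith
      rw [hl]
      have H : 2 * Nat.choose i (j+1) * Nat.choose m l * ((j+1) * (l+1)) ≤
          Nat.choose i j * Nat.choose m (l+1) * ((j+1) * (l+1)) := by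
        calc 2 * Nat.choose i (j+1) * Nat.choose m l * ((j+1) * (l+1))
            = 2 * (Nat.choose i (j+1) * (j+1)) * (Nat.choose m l * (l+1)) := by ring
          _ = Nat.choose i j * Nat.choose m l * (2 * (i-j) * (l+1)) := by rw [A]; ring
          _ ≤ Nat.choose i j * Nat.choose m l * ((m-l) * (j+1)) :=
              Nat.mul_le_mul_left _ K
          _ = Nat.choose i j * (Nat.choose m (l+1) * (l+1)) * (j+1) := by rw [B]; ring
          _ = Nat.choose i j * Nat.choose m (l+1) * ((j+1) * (l+1)) := by ring
      exact Nat.le_of_mul_le_mul_right H (by positivity)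
    · have : Nat.choose (n-i) (k-(j+1)) = 0 := Nat.choose_eq_zero_of_lt (by omega)
      simp [this]
  · have : Nat.choose i (j+1) = 0 := Nat.choose_eq_zero_of_lt (by omega)
    simp [this]

lemma hypPMF_nonneg (n i k j : ℕ) : 0 ≤ hypPMF n i k j := by
  unfold hypPMF; positivity

/-- Ratio bound: `2·P(H = j+1) ≤ P(H = j)` for `j ≥ 1` when `i·k ≤ n`. -/
lemma hyp_step (n i k j : ℕ) (hik : i*k ≤ n) (hin : i ≤ n) (hkn : k ≤ n)
    (hj : 1 ≤ j) (hjk : j+1 ≤ k) :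
    2 * hypPMF n i k (j+1) ≤ hypPMF n i k j := by
  unfold hypPMF
  have hden : (0:ℝ) < (Nat.choose n k : ℝ) := by
    exact_mod_cast Nat.choose_pos hkn
  have hnum : (2:ℝ) * (Nat.choose i (j+1) : ℝ) * (Nat.choose (n-i) (k-(j+1)) : ℝ)
      ≤ (Nat.choose i j : ℝ) * (Nat.choose (n-i) (k-j) : ℝ) := by
    exact_mod_cast hyp_num_ineq n i k j hik hin hj hjk
  calc 2 * ((Nat.choose i (j+1) : ℝ) * (Nat.choose (n-i) (k-(j+1)) : ℝ) / (Nat.choose n k : ℝ))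
      = (2 * (Nat.choose i (j+1) : ℝ) * (Nat.choose (n-i) (k-(j+1)) : ℝ)) / (Nat.choose n k : ℝ) := by
        ring
    _ ≤ (Nat.choose i j : ℝ) * (Nat.choose (n-i) (k-j) : ℝ) / (Nat.choose n k : ℝ) := by
        gcongr

/-- Downward induction: the tail above `t` is at most `P(H = t)` for `t ≥ 1`. -/
lemma hyp_tail_aux (n i k : ℕ) (hik : i*k ≤ n) (hin : i ≤ n) (hkn : k ≤ n) :
    ∀ m t : ℕ, 1 ≤ t → t + m = k →
      (∑ j ∈ Finset.Ico (t+1) (k+1), hypPMF n i k j) ≤ hypPMF n i k t := by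
  intro m
  induction m with
  | zero =>
    intro t ht htm
    have : t + 1 = k + 1 := by omega
    rw [this, Finset.Ico_self, Finset.sum_empty]
    exact hypPMF_nonneg n i k t
  | succ m ih =>
    intro t ht htm
    have h1 : t + 1 ≤ k := by omega
    rw [Finset.sum_eq_sum_Ico_succ_bot (by omega : t + 1 < k + 1)]
    have h2 := ih (t+1) (by omega) (by omega)
    have h3 := hyp_step n i k t hik hin hkn ht h1
    linarith

/-- If `H ~ Hyp(n,i,k)` satisfies `E(H) = i·k/n ≤ 1`, then `P(H = 1) ≥ P(H ≥ 2)`. -/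
theorem hyp_pmf_one_ge_tail_two (n i k : ℕ) (hn : 0 < n) (hk1 : 1 ≤ k) (hk2 : k ≤ n)
    (hi1 : 1 ≤ i) (hi2 : i ≤ n)
    (hmean : (i : ℝ) * k / n ≤ 1) :
    hypTail n i k 2 ≤ hypPMF n i k 1 := by
  have hnR : (0:ℝ) < n := by exact_mod_cast hn
  have hik : i * k ≤ n := by
    have : (i:ℝ) * k ≤ n := by
      rw [div_le_one hnR] at hmean; exact hmean
    exact_mod_cast this
  have htail : hypTail n i k 2 = ∑ j ∈ Finset.Ico 2 (k+1), hypPMF n i k j := by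
    unfold hypTail
    rw [Finset.range_eq_Ico, ← Finset.sum_Ico_consecutive _ (Nat.zero_le 2) (by omega : 2 ≤ k+1)]
    have h1 : (∑ j ∈ Finset.Ico (0:ℕ) 2, if (2:ℝ) ≤ (j:ℝ) then hypPMF n i k j else 0) = 0 := by
      have he : Finset.Ico (0:ℕ) 2 = {0, 1} := by decide
      rw [he]; norm_num
    have h2 : (∑ j ∈ Finset.Ico 2 (k+1), if (2:ℝ) ≤ (j:ℝ) then hypPMF n i k j else 0)
        = ∑ j ∈ Finset.Ico 2 (k+1), hypPMF n i k j := by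
      refine Finset.sum_congr rfl fun j hj => ?_
      rw [if_pos]
      have := (Finset.mem_Ico.mp hj).1
      exact_mod_cast this
    rw [h1, h2, zero_add]
  rw [htail]
  exact hyp_tail_aux n i k hik hi2 hk2 (k-1) 1 le_rfl (by omega)
end

section
/- Let H ~ Hyp(n,i,k) be a hypergeometric random variable, and fix an integer m ∈ {0,1,...,min{i,k}}. Then P(H ≥ m) = (C(k,m)·C(i,m)/C(n,m)) · E(1/C(Z_m + m, m)), where Z_m ~ Hyp(n−m, i−m, k−m). -/
open Finset

theorem Finset.sum_range_ite_le_eq_sum_range_add {M : Type*} [AddCommMonoid M]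
    (f : ℕ → M) (m N : ℕ) :
    ∑ j ∈ range N, (if m ≤ j then f j else 0) = ∑ j ∈ range (N - m), f (m + j) := by
  rw [← sum_filter, range_eq_Ico, Ico_filter_le, Nat.zero_max, sum_Ico_eq_sum_range]

theorem hypPMF_add_eq_mul_hypPMF (n i k m j : ℕ) (hk : k ≤ n) (hmi : m ≤ i) (hmk : m ≤ k) :
    hypPMF n i k (m + j) =
      (k.choose m * i.choose m / n.choose m : ℝ) *
        (1 / (j + m).choose m * hypPMF (n - m) (i - m) (k - m) j) := by
  have hsplit : (i.choose (m + j) * (m + j).choose m : ℝ) = i.choose m * (i - m).choose j := by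
    have := Nat.choose_mul (n := i) (Nat.le_add_right m j)
    rw [Nat.add_sub_cancel_left] at this
    exact_mod_cast this
  have hsample : (n.choose k * k.choose m : ℝ) = n.choose m * (n - m).choose (k - m) := by
    exact_mod_cast Nat.choose_mul hmk
  have hN : (n.choose k : ℝ) ≠ 0 := by exact_mod_cast (Nat.choose_pos hk).ne'
  have hM : (n.choose m : ℝ) ≠ 0 := by exact_mod_cast (Nat.choose_pos (hmk.trans hk)).ne'
  have hP : ((n - m).choose (k - m) : ℝ) ≠ 0 := by
    exact_mod_cast (Nat.choose_pos (Nat.sub_le_sub_right hk m)).ne'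
  have hB : ((m + j).choose m : ℝ) ≠ 0 := by
    exact_mod_cast (Nat.choose_pos (Nat.le_add_right m j)).ne'
  rw [add_comm j m]
  unfold hypPMF
  rw [show n - m - (i - m) = n - i by omega, show k - m - j = k - (m + j) by omega]
  field_simp
  linear_combination
    (n.choose m * (n - m).choose (k - m) * (n - i).choose (k - (m + j)) : ℝ) * hsplit
      - (i.choose m * (i - m).choose j * (n - i).choose (k - (m + j)) : ℝ) * hsample

/-- The expectation `E(1/C(Z_m + m, m))` is written out as a sum over `{0,…,k−m}`, which
contains the support of `Z_m ~ Hyp(n−m, i−m, k−m)`. -/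
theorem hyp_tail_eq_inverse_factorial_moment_general (n i k m : ℕ)
    (hk2 : k ≤ n) (hm : m ≤ min i k) :
    hypTail n i k (m : ℝ) =
      ((Nat.choose k m : ℝ) * (Nat.choose i m : ℝ) / (Nat.choose n m : ℝ)) *
        ∑ j ∈ Finset.range (k - m + 1),
          (1 / (Nat.choose (j + m) m : ℝ)) * hypPMF (n - m) (i - m) (k - m) j := by
  obtain ⟨hmi, hmk⟩ := le_min_iff.mp hm
  simp only [hypTail, Nat.cast_le, sum_range_ite_le_eq_sum_range_add, mul_sum]
  rw [show k + 1 - m = k - m + 1 by omega]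
  exact sum_congr rfl fun j _ ↦ hypPMF_add_eq_mul_hypPMF n i k m j hk2 hmi hmk

/-- For `H ~ Hyp(n,i,k)` and an integer `m ∈ {0,1,…,min{i,k}}`,
`P(H ≥ m) = (C(k,m)·C(i,m)/C(n,m)) · E(1/C(Z_m + m, m))`, where
`Z_m ~ Hyp(n−m, i−m, k−m)`; the expectation is written out as a sum over the
support of `Z_m`, which is contained in `{0,…,k−m}`. -/
theorem hyp_tail_eq_inverse_factorial_moment (n i k m : ℕ) (hn : 0 < n) (hk1 : 1 ≤ k)
    (hk2 : k ≤ n) (hi1 : 1 ≤ i) (hi2 : i ≤ n) (hm : m ≤ min i k) :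
    hypTail n i k (m : ℝ) =
      ((Nat.choose k m : ℝ) * (Nat.choose i m : ℝ) / (Nat.choose n m : ℝ)) *
        ∑ j ∈ Finset.range (k - m + 1),
          (1 / (Nat.choose (j + m) m : ℝ)) * hypPMF (n - m) (i - m) (k - m) j :=
  hyp_tail_eq_inverse_factorial_moment_general n i k m hk2 hm
end

section
/- Let n be a positive integer and i, k ∈ {1,...,n}. Let H ~ Hyp(n,i,k) and X ~ Bin(k, i/n), and assume that (1) i·k/n ∈ (m−1, m] for some integer m ∈ {2,3,...,min{i,k}−2}, and (2) (n−i)(n−k)/n > 1. Then P(H = m) / P(X = m) ≥ (e^{−1/8}/2) · √( i(n−i)(n−k) / ((i−m)(n−i−k+m)·n) ). -/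
/-- The probability mass function of the binomial distribution `Bin(k,p)`. -/
noncomputable def binPMF (k : ℕ) (p : ℝ) (j : ℕ) : ℝ :=
  (Nat.choose k j : ℝ) * p ^ j * (1 - p) ^ (k - j)

/-!
Write `i = m + u`, `k = m + l`, `n = m + u + l + v`. The ratio is a quotient of six factorials
times powers of `i`, `n - i`, `n`. Stirling's formula with Robbins' remainder
`0 ≤ r a ≤ 1 / (12 a)` turns its logarithm into
`u log (x / u) + v log (y / v) + ½ log (i (n - i) (n - k) / (u v n))` plus remainders, where
`x = i (n - k) / n` and `y = (n - i) (n - k) / n` satisfy `x + y = u + v`,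
`x - u = m - i k / n ∈ [0, 1]` and `y > 1`. The two entropy terms then cost at most `7 / 10`
and the remainders at most `1 / 24 + 1 / 24 + 1 / 48`, less than `1 / 8 + log 2`.
-/

open Real Filter Topology
open scoped Nat

namespace Stirling

/-- Robbins' remainder: `n ! = √(2 π n) (n / e) ^ n * exp (remainder n)`. -/
noncomputable def remainder (n : ℕ) : ℝ := log (stirlingSeq n) - log √π

theorem log_factorial_eq_add_remainder {n : ℕ} (hn : n ≠ 0) :
    log n ! = n * log n - n + log n / 2 + log (2 * π) / 2 + remainder n := by
  have hn' : (0 : ℝ) < n := by positivity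
  have hfac : (0 : ℝ) < n ! := by positivity
  rw [remainder, stirlingSeq, log_div hfac.ne' (by positivity),
    log_mul (x := √(2 * (n : ℝ))) (by positivity) (by positivity), log_pow,
    log_div hn'.ne' (exp_pos 1).ne', log_exp, log_sqrt (by positivity), log_sqrt pi_pos.le,
    log_mul two_ne_zero hn'.ne', log_mul two_ne_zero pi_ne_zero]
  ring

theorem remainder_nonneg {n : ℕ} (hn : n ≠ 0) : 0 ≤ remainder n :=
  sub_nonneg.2 <| log_le_log (by positivity) (sqrt_pi_le_stirlingSeq hn)

theorem remainder_le {n : ℕ} (hn : n ≠ 0) : remainder n ≤ 1 / (12 * n) := by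
  obtain ⟨n, rfl⟩ := Nat.exists_eq_succ_of_ne_zero hn
  set f : ℕ → ℝ := fun j ↦ remainder (j + 1) - 1 / (12 * (j + 1 : ℕ))
  have hf : Monotone f := monotone_nat_of_le_succ fun j ↦ by
    have := log_stirlingSeq_sdiff_le (j + 1)
    simp only [f, remainder]
    push_cast at this ⊢
    rw [show (1 : ℝ) / (12 * (j + 1) * (j + 1 + 1)) = 1 / (12 * (j + 1)) - 1 / (12 * (j + 1 + 1))
      by field_simp; ring] at this
    linarith
  have hlim : Tendsto f atTop (𝓝 0) := by
    have hs := ((tendsto_stirlingSeq_sqrt_pi.comp (tendsto_add_atTop_nat 1)).log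
      (by positivity)).sub_const (log √π)
    have hr : Tendsto (fun j : ℕ ↦ 1 / (12 * ((j + 1 : ℕ) : ℝ))) atTop (𝓝 0) := by
      simpa [div_eq_mul_inv] using tendsto_one_div_add_atTop_nhds_zero_nat.div_const (12 : ℝ)
    simpa [f, remainder] using hs.sub hr
  simpa [f] using hf.ge_of_tendsto hlim n

end Stirling

open Stirling

theorem Real.log_le_half_sub_inv {x : ℝ} (hx : 1 ≤ x) : log x ≤ (x - x⁻¹) / 2 := by
  rw [← sinh_log (by linarith)]
  exact self_le_sinh_iff.2 (log_nonneg hx)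

theorem neg_seven_div_ten_le_mul_log_div_add_mul_log_div {u v x y : ℝ} (hu : 2 ≤ u) (hux : u ≤ x)
    (hx : x ≤ u + 1) (hy : 1 < y) (hxy : x + y = u + v) :
    -(7 / 10) ≤ u * log (x / u) + v * log (y / v) := by
  set s := x - u
  have hv : v = y + s := by linarith
  have hs₀ : 0 ≤ s := by linarith
  have hs₁ : s ≤ 1 := by linarith
  have hu₀ : 0 < u := by linarith
  have hy₀ : 0 < y := by linarith
  have hx_log : 2 * u * s / (s + 2 * u) ≤ u * log (x / u) := by
    have := le_log_one_add_of_nonneg (div_nonneg hs₀ hu₀.le)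
    rw [show 1 + s / u = x / u by field_simp; ring] at this
    calc 2 * u * s / (s + 2 * u) = u * (2 * (s / u) / (s / u + 2)) := by field_simp
      _ ≤ u * log (x / u) := by gcongr
  have hy_log : -(s + s ^ 2 / (2 * y)) ≤ v * log (y / v) := by
    have := log_le_half_sub_inv (x := v / y) (by rw [le_div_iff₀ hy₀]; linarith)
    rw [show log (y / v) = -log (v / y) by rw [← log_inv, inv_div]]
    calc -(s + s ^ 2 / (2 * y)) = -(v * ((v / y - (v / y)⁻¹) / 2)) := by
          rw [hv]; field_simp; ring
      _ ≤ v * -log (v / y) := by rw [mul_neg, neg_le_neg_iff]; gcongr; linarith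
  have h₁ : s ^ 2 / (s + 2 * u) ≤ 1 / 5 := by
    rw [div_le_div_iff₀ (by positivity) (by norm_num)]; nlinarith
  have h₂ : s ^ 2 / (2 * y) ≤ 1 / 2 := by
    rw [div_le_div_iff₀ (by positivity) (by norm_num)]; nlinarith
  have : 2 * u * s / (s + 2 * u) = s - s ^ 2 / (s + 2 * u) := by field_simp; ring
  linarith

theorem hypPMF_div_binPMF (m u l v : ℕ) :
    hypPMF (m + u + (l + v)) (m + u) (m + l) m /
        binPMF (m + l) ((m + u : ℕ) / (m + u + (l + v) : ℕ)) m =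
      (m + u)! * (l + v)! * (u + v)! * ((m + u + (l + v) : ℕ) : ℝ) ^ (m + l) /
        (u ! * v ! * (m + u + (l + v))! * ((m + u : ℕ) : ℝ) ^ m * ((l + v : ℕ) : ℝ) ^ l) := by
  rcases Nat.eq_zero_or_pos (m + u + (l + v)) with h₀ | hN
  · obtain ⟨rfl, rfl, rfl, rfl⟩ : m = 0 ∧ u = 0 ∧ l = 0 ∧ v = 0 := by omega
    simp [hypPMF, binPMF]
  have hB : (l + v : ℕ) = m + u + (l + v) - (m + u) := by omega
  have hC : (u + v : ℕ) = m + u + (l + v) - (m + l) := by omega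
  have hq : 1 - ((m + u : ℕ) : ℝ) / (m + u + (l + v) : ℕ) =
      (l + v : ℕ) / (m + u + (l + v) : ℕ) := by
    field_simp; push_cast; ring
  rw [hypPMF, binPMF, hq, ← hB, Nat.add_sub_cancel_left,
    Nat.cast_choose ℝ (Nat.le_add_right m u), Nat.cast_choose ℝ (Nat.le_add_right l v),
    Nat.cast_choose ℝ (Nat.le_add_right m l),
    Nat.cast_choose ℝ (show m + l ≤ m + u + (l + v) by omega), ← hC]
  simp only [Nat.add_sub_cancel_left]
  have hN' : ((m + u + (l + v) : ℕ) : ℝ) ≠ 0 := by positivity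
  rw [div_pow, div_pow]
  field_simp
  ring

theorem log_hypPMF_div_binPMF {m u l v : ℕ} (hu : u ≠ 0) (hv : v ≠ 0) :
    log (hypPMF (m + u + (l + v)) (m + u) (m + l) m /
        binPMF (m + l) ((m + u : ℕ) / (m + u + (l + v) : ℕ)) m) =
      u * log (((m + u : ℕ) : ℝ) * (u + v : ℕ) / (m + u + (l + v) : ℕ) / u) +
        v * log (((l + v : ℕ) : ℝ) * (u + v : ℕ) / (m + u + (l + v) : ℕ) / v) +
        log (((m + u : ℕ) : ℝ) * (l + v : ℕ) * (u + v : ℕ) /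
          (u * v * (m + u + (l + v) : ℕ))) / 2 +
        (remainder (m + u) + remainder (l + v) + remainder (u + v) -
          remainder u - remainder v - remainder (m + u + (l + v))) := by
  rw [hypPMF_div_binPMF]
  have hu' : (0 : ℝ) < u := by positivity
  have hv' : (0 : ℝ) < v := by positivity
  push_cast
  simp (disch := positivity) only [log_mul, log_div, log_pow]
  rw [log_factorial_eq_add_remainder (n := m + u) (by omega),
    log_factorial_eq_add_remainder (n := l + v) (by omega),
    log_factorial_eq_add_remainder (n := u + v) (by omega),
    log_factorial_eq_add_remainder hu, log_factorial_eq_add_remainder hv,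
    log_factorial_eq_add_remainder (n := m + u + (l + v)) (by omega)]
  push_cast
  ring

theorem exp_neg_div_two_mul_sqrt_le_hypPMF_div_binPMF {m u l v : ℕ} (hu : 2 ≤ u) (hv : 2 ≤ v)
    (hx₀ : (u : ℝ) ≤ ((m + u : ℕ) : ℝ) * (u + v : ℕ) / (m + u + (l + v) : ℕ))
    (hx₁ : ((m + u : ℕ) : ℝ) * (u + v : ℕ) / (m + u + (l + v) : ℕ) ≤ u + 1)
    (hy : 1 < ((l + v : ℕ) : ℝ) * (u + v : ℕ) / (m + u + (l + v) : ℕ)) :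
    exp (-1 / 8) / 2 *
        √(((m + u : ℕ) : ℝ) * (l + v : ℕ) * (u + v : ℕ) / (u * v * (m + u + (l + v) : ℕ))) ≤
      hypPMF (m + u + (l + v)) (m + u) (m + l) m /
        binPMF (m + l) ((m + u : ℕ) / (m + u + (l + v) : ℕ)) m := by
  have hu' : (2 : ℝ) ≤ u := by exact_mod_cast hu
  have hv' : (2 : ℝ) ≤ v := by exact_mod_cast hv
  have hN : (4 : ℝ) ≤ (m + u + (l + v) : ℕ) := by norm_cast; omega
  have hratio : 0 < hypPMF (m + u + (l + v)) (m + u) (m + l) m /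
      binPMF (m + l) ((m + u : ℕ) / (m + u + (l + v) : ℕ)) m := by
    rw [hypPMF_div_binPMF]; positivity
  rw [← log_le_log_iff (by positivity) hratio, log_hypPMF_div_binPMF (by omega) (by omega),
    log_mul (by positivity) (by positivity), log_div (by positivity) two_ne_zero, log_exp,
    log_sqrt (by positivity)]
  have hentropy := neg_seven_div_ten_le_mul_log_div_add_mul_log_div (v := v) hu' hx₀ hx₁ hy
    (by field_simp; push_cast; ring)
  have hrem_u := remainder_le (n := u) (by omega)
  have hrem_v := remainder_le (n := v) (by omega)
  have hrem_N := remainder_le (n := m + u + (l + v)) (by omega)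
  have hrem_i := remainder_nonneg (n := m + u) (by omega)
  have hrem_ni := remainder_nonneg (n := l + v) (by omega)
  have hrem_nk := remainder_nonneg (n := u + v) (by omega)
  have hu_inv : 1 / (12 * (u : ℝ)) ≤ 1 / 24 := by gcongr; linarith
  have hv_inv : 1 / (12 * (v : ℝ)) ≤ 1 / 24 := by gcongr; linarith
  have hN_inv : 1 / (12 * ((m + u + (l + v) : ℕ) : ℝ)) ≤ 1 / 48 := by gcongr; linarith
  linarith [log_two_gt_d9]

theorem hyp_bin_pmf_ratio_general (n i k m : ℕ) (hn : 0 < n)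
    (hm2 : m + 2 ≤ min i k)
    (hmean1 : (m : ℝ) - 1 < (i : ℝ) * k / n)
    (hmean2 : (i : ℝ) * k / n ≤ (m : ℝ))
    (hcond : 1 < ((n : ℝ) - i) * ((n : ℝ) - k) / n) :
    Real.exp (-1/8) / 2 *
        Real.sqrt ((i : ℝ) * ((n : ℝ) - i) * ((n : ℝ) - k) /
          ((((i : ℝ) - m) * ((n : ℝ) - i - k + m)) * n))
      ≤ hypPMF n i k m / binPMF k ((i : ℝ) / n) m := by
  have hmik : i + k + 2 ≤ n + m := by
    have hsplit : ((n : ℝ) - i) * ((n : ℝ) - k) / n = n - i - k + (i : ℝ) * k / n := by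
      field_simp; ring
    have : (i + k + 1 : ℝ) < n + m := by linarith
    have : i + k + 1 < n + m := by exact_mod_cast this
    omega
  obtain ⟨u, rfl⟩ : ∃ u, i = m + u := ⟨i - m, by omega⟩
  obtain ⟨l, rfl⟩ : ∃ l, k = m + l := ⟨k - m, by omega⟩
  obtain ⟨v, rfl⟩ : ∃ v, n = m + u + (l + v) := ⟨n - (m + u) - l, by omega⟩
  have hx : ((m + u : ℕ) : ℝ) * (u + v : ℕ) / (m + u + (l + v) : ℕ) =
      (m + u : ℕ) - (m + u : ℕ) * (m + l : ℕ) / (m + u + (l + v) : ℕ) := by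
    field_simp; push_cast; ring
  have hy : ((l + v : ℕ) : ℝ) * (u + v : ℕ) / (m + u + (l + v) : ℕ) =
      ((m + u + (l + v) : ℕ) - (m + u : ℕ)) * ((m + u + (l + v) : ℕ) - (m + l : ℕ)) /
        (m + u + (l + v) : ℕ) := by
    push_cast; ring
  convert exp_neg_div_two_mul_sqrt_le_hypPMF_div_binPMF (m := m) (l := l) (by omega) (by omega)
    (by push_cast at hx hmean2 ⊢; linarith) (by push_cast at hx hmean1 ⊢; linarith) (hy ▸ hcond)
    using 3
  push_cast; ring

/-- Let `H ~ Hyp(n,i,k)` and `X ~ Bin(k, i/n)`. If `i·k/n ∈ (m−1, m]` for some integer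
`m ∈ {2,…,min{i,k}−2}` and `(n−i)(n−k)/n > 1`, then
`P(H = m)/P(X = m) ≥ (e^{−1/8}/2) · √(i(n−i)(n−k) / ((i−m)(n−i−k+m)·n))`. -/
theorem hyp_bin_pmf_ratio (n i k m : ℕ) (hn : 0 < n)
    (hi1 : 1 ≤ i) (hi2 : i ≤ n) (hk1 : 1 ≤ k) (hk2 : k ≤ n)
    (hm1 : 2 ≤ m) (hm2 : m + 2 ≤ min i k)
    (hmean1 : (m : ℝ) - 1 < (i : ℝ) * k / n)
    (hmean2 : (i : ℝ) * k / n ≤ (m : ℝ))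
    (hcond : 1 < ((n : ℝ) - i) * ((n : ℝ) - k) / n) :
    Real.exp (-1/8) / 2 *
        Real.sqrt ((i : ℝ) * ((n : ℝ) - i) * ((n : ℝ) - k) /
          ((((i : ℝ) - m) * ((n : ℝ) - i - k + m)) * n))
      ≤ hypPMF n i k m / binPMF k ((i : ℝ) / n) m :=
  hyp_bin_pmf_ratio_general n i k m hn hm2 hmean1 hmean2 hcond
end

section
/- Let X be a random variable with finite second moment whose mean μ = E(X) is also a median of X (that is, P(X ≥ μ) ≥ 1/2 and P(X ≤ μ) ≥ 1/2). Then E(X | X ≥ μ) ≤ μ + √Var(X). -/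
/-!
Write `Z = X - E X`. On any event `A`, `∫_A Z ≤ E Z⁺ = E|Z| / 2` because `E Z = 0`, and
`E|Z| ≤ √(E Z²) = √Var X`. Hence `E(X | A) ≤ E X + √Var X / (2 P(A))`, which is at most
`E X + √Var X` as soon as `P(A) ≥ 1/2`; the median hypothesis provides this for `A = {X ≥ E X}`.
-/

open MeasureTheory ProbabilityTheory

section

variable {Ω : Type*} [MeasurableSpace Ω] {μ : Measure Ω}

lemma setIntegral_le_half_integral_abs_of_integral_eq_zero {Z : Ω → ℝ} (hZ : Integrable Z μ)
    (hZ_mean : ∫ ω, Z ω ∂μ = 0) (s : Set Ω) :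
    ∫ ω in s, Z ω ∂μ ≤ (∫ ω, |Z ω| ∂μ) / 2 :=
  calc ∫ ω in s, Z ω ∂μ ≤ ∫ ω in s, (Z ω)⁺ ∂μ :=
        setIntegral_mono hZ.integrableOn hZ.pos_part.integrableOn fun ω => le_posPart (Z ω)
    _ ≤ ∫ ω, (Z ω)⁺ ∂μ :=
        setIntegral_le_integral hZ.pos_part (ae_of_all _ fun ω => posPart_nonneg (Z ω))
    _ = (∫ ω, |Z ω| ∂μ) / 2 := by
        rw [integral_abs_eq_two_mul_integral_posPart_sub_integral hZ, hZ_mean]; ring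

lemma sq_integral_abs_le_integral_sq [IsProbabilityMeasure μ] {Y : Ω → ℝ} (hY : MemLp Y 2 μ) :
    (∫ ω, |Y ω| ∂μ) ^ 2 ≤ ∫ ω, Y ω ^ 2 ∂μ := by
  have h := variance_nonneg |Y| μ
  rw [variance_eq_sub hY.abs] at h
  simpa [sq_abs] using h

lemma integral_abs_sub_integral_le_sqrt_variance [IsProbabilityMeasure μ] {X : Ω → ℝ}
    (hX : MemLp X 2 μ) :
    ∫ ω, |X ω - μ[X]| ∂μ ≤ √(Var[X; μ]) := by
  rw [variance_eq_integral hX.aestronglyMeasurable.aemeasurable]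
  exact Real.le_sqrt_of_sq_le (sq_integral_abs_le_integral_sq (hX.sub (memLp_const _)))

theorem setIntegral_div_measureReal_le_integral_add_sqrt_variance [IsProbabilityMeasure μ]
    {X : Ω → ℝ} (hX : MemLp X 2 μ) {s : Set Ω} (hs : 1 / 2 ≤ μ.real s) :
    (∫ ω in s, X ω ∂μ) / μ.real s ≤ μ[X] + √(Var[X; μ]) := by
  have hX_int : Integrable X μ := hX.integrable one_le_two
  have hsplit : ∫ ω in s, X ω ∂μ = μ.real s * μ[X] + ∫ ω in s, (X ω - μ[X]) ∂μ := by
    rw [integral_sub hX_int.integrableOn (integrable_const _), setIntegral_const, smul_eq_mul]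
    ring
  have hcentered_mean : ∫ ω, (X ω - μ[X]) ∂μ = 0 := by
    rw [integral_sub hX_int (integrable_const _), integral_const]
    simp
  have htail : ∫ ω in s, (X ω - μ[X]) ∂μ ≤ √(Var[X; μ]) / 2 :=
    (setIntegral_le_half_integral_abs_of_integral_eq_zero (hX_int.sub (integrable_const _))
      hcentered_mean s).trans
      (div_le_div_of_nonneg_right (integral_abs_sub_integral_le_sqrt_variance hX) two_pos.le)
  rw [div_le_iff₀ (by linarith), hsplit]
  nlinarith [Real.sqrt_nonneg (Var[X; μ])]

end

theorem tce_le_mean_add_sqrt_var_general {Ω : Type*} [MeasurableSpace Ω]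
    (μ : Measure Ω) [IsProbabilityMeasure μ] (X : Ω → ℝ)
    (hX : MemLp X 2 μ)
    (hmed1 : (1 : ENNReal) / 2 ≤ μ {ω | (∫ ω', X ω' ∂μ) ≤ X ω}) :
    (∫ ω in {ω | (∫ ω', X ω' ∂μ) ≤ X ω}, X ω ∂μ) /
        (μ {ω | (∫ ω', X ω' ∂μ) ≤ X ω}).toReal
      ≤ (∫ ω', X ω' ∂μ) + Real.sqrt (ProbabilityTheory.variance X μ) := by
  have hhalf : 1 / 2 ≤ μ.real {ω | (∫ ω', X ω' ∂μ) ≤ X ω} := by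
    simpa [measureReal_def] using ENNReal.toReal_mono (measure_ne_top μ _) hmed1
  exact setIntegral_div_measureReal_le_integral_add_sqrt_variance hX hhalf

/-- If `X` has finite second moment and its mean `μ = E(X)` is also a median
(`P(X ≥ μ) ≥ 1/2` and `P(X ≤ μ) ≥ 1/2`), then the tail conditional expectation
satisfies `E(X | X ≥ μ) ≤ μ + √Var(X)`. -/
theorem tce_le_mean_add_sqrt_var {Ω : Type*} [MeasurableSpace Ω]
    (μ : Measure Ω) [IsProbabilityMeasure μ] (X : Ω → ℝ)
    (hX : MemLp X 2 μ)
    (hmed1 : (1 : ENNReal) / 2 ≤ μ {ω | (∫ ω', X ω' ∂μ) ≤ X ω})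
    (hmed2 : (1 : ENNReal) / 2 ≤ μ {ω | X ω ≤ ∫ ω', X ω' ∂μ}) :
    (∫ ω in {ω | (∫ ω', X ω' ∂μ) ≤ X ω}, X ω ∂μ) /
        (μ {ω | (∫ ω', X ω' ∂μ) ≤ X ω}).toReal
      ≤ (∫ ω', X ω' ∂μ) + Real.sqrt (ProbabilityTheory.variance X μ) :=
  tce_le_mean_add_sqrt_var_general μ X hX hmed1
end

section
/- Let H ~ Hyp(n,i,k) and X ~ Bin(k, i/n). Then the tail conditional expectations satisfy E(H | H ≥ E(H)) ≤ E(X | X ≥ E(X)). -/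
/-- The tail conditional expectation `E(H | H ≥ t)` of `H ~ Hyp(n,i,k)`. -/
noncomputable def hypTCE (n i k : ℕ) (t : ℝ) : ℝ :=
  (∑ j ∈ Finset.range (k + 1), if t ≤ (j : ℝ) then (j : ℝ) * hypPMF n i k j else 0) /
    (∑ j ∈ Finset.range (k + 1), if t ≤ (j : ℝ) then hypPMF n i k j else 0)

/-- The tail conditional expectation `E(X | X ≥ t)` of `X ~ Bin(k,p)`. -/
noncomputable def binTCE (k : ℕ) (p : ℝ) (t : ℝ) : ℝ :=
  (∑ j ∈ Finset.range (k + 1), if t ≤ (j : ℝ) then (j : ℝ) * binPMF k p j else 0) /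
    (∑ j ∈ Finset.range (k + 1), if t ≤ (j : ℝ) then binPMF k p j else 0)

lemma binPMF_nonneg (k j : ℕ) {p : ℝ} (h0 : 0 ≤ p) (h1 : p ≤ 1) : 0 ≤ binPMF k p j := by
  unfold binPMF
  have : (0:ℝ) ≤ 1 - p := by linarith
  positivity

lemma hypPMF_pos (n i k j : ℕ) (h1 : j ≤ i) (h2 : k - j ≤ n - i) (h3 : k ≤ n) :
    0 < hypPMF n i k j := by
  unfold hypPMF
  apply div_pos
  · exact mul_pos (by exact_mod_cast Nat.choose_pos h1) (by exact_mod_cast Nat.choose_pos h2)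
  · exact_mod_cast Nat.choose_pos h3

lemma binPMF_pos (k j : ℕ) {p : ℝ} (h0 : 0 < p) (h1 : p < 1) (hj : j ≤ k) :
    0 < binPMF k p j := by
  unfold binPMF
  have : (0:ℝ) < 1 - p := by linarith
  have := Nat.choose_pos hj
  positivity

lemma binPMF_eq (n i k j : ℕ) (hi : i ≤ n) (hn : 0 < n) (hj : j ≤ k) :
    binPMF k ((i:ℝ)/n) j
      = ((Nat.choose k j : ℝ) * (i:ℝ)^j * ((n - i : ℕ) : ℝ)^(k-j)) / (n:ℝ)^k := by
  unfold binPMF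
  have hn' : (0:ℝ) < n := by exact_mod_cast hn
  have h1 : (1:ℝ) - (i:ℝ)/n = ((n - i : ℕ):ℝ)/(n:ℝ) := by
    rw [Nat.cast_sub hi]; field_simp
  have h2 : (n:ℝ)^k = (n:ℝ)^j * (n:ℝ)^(k-j) := by rw [← pow_add]; congr 1; omega
  rw [h1, div_pow, div_pow, h2]
  field_simp

lemma tail_k_le (n i k j : ℕ) (hn : 0 < n) (hi2 : i ≤ n) (hk2 : k ≤ n)
    (hnk : i * k ≤ n * j) : k ≤ (n - i) + j := by
  have h1 : n * k = i * k + (n - i) * k := by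
    rw [← Nat.add_mul]; congr 1; omega
  have h4 : n * k ≤ n * ((n - i) + j) := by
    calc n * k = i * k + (n - i) * k := h1
      _ ≤ n * j + (n - i) * n := Nat.add_le_add hnk (Nat.mul_le_mul_left _ hk2)
      _ = n * ((n - i) + j) := by ring
  exact Nat.le_of_mul_le_mul_left h4 hn

lemma keyNat (n i k j : ℕ) (hjk : j + 1 ≤ k) (hji : j + 1 ≤ i)
    (hkni : k ≤ (n - i) + j) (hnk : i * k ≤ n * j) (hin : i ≤ n) :
    Nat.choose k j * i ^ j * (n - i) ^ (k - j) *
      (Nat.choose i (j + 1) * Nat.choose (n - i) (k - (j + 1))) ≤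
    Nat.choose k (j + 1) * i ^ (j + 1) * (n - i) ^ (k - (j + 1)) *
      (Nat.choose i j * Nat.choose (n - i) (k - j)) := by
  obtain ⟨d, hd⟩ : ∃ d, k = j + 1 + d := ⟨k - (j+1), by omega⟩
  obtain ⟨e, he⟩ : ∃ e, i = j + 1 + e := ⟨i - (j+1), by omega⟩
  obtain ⟨g, hg⟩ : ∃ g, n - i = d + 1 + g := ⟨(n-i) - (d+1), by omega⟩
  obtain ⟨m, hm⟩ : ∃ m, n = i + m := ⟨n - i, by omega⟩
  have hmg : m = d + 1 + g := by omega
  subst hd he hm hmg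
  have hs1 : j + 1 + d - j = d + 1 := by omega
  have hs2 : j + 1 + d - (j + 1) = d := by omega
  have hs3 : j + 1 + e + (d + 1 + g) - (j + 1 + e) = d + 1 + g := by omega
  rw [hs1, hs2, hs3] at *
  have e1 : Nat.choose (j+1+e) (j+1) * (j+1) = Nat.choose (j+1+e) j * (e+1) := by
    have := Nat.choose_succ_right_eq (j+1+e) j
    have h : j + 1 + e - j = e + 1 := by omega
    rw [h] at this; exact this
  have e2 : Nat.choose (j+1+d) (j+1) * (j+1) = Nat.choose (j+1+d) j * (d+1) := by
    have := Nat.choose_succ_right_eq (j+1+d) j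
    have h : j + 1 + d - j = d + 1 := by omega
    rw [h] at this; exact this
  have e3 : Nat.choose (d+1+g) (d+1) * (d+1) = Nat.choose (d+1+g) d * (g+1) := by
    have := Nat.choose_succ_right_eq (d+1+g) d
    have h : d + 1 + g - d = g + 1 := by omega
    rw [h] at this; exact this
  have scal : (d+1+g) * (e+1) ≤ (j+1+e) * (g+1) := by nlinarith [hnk]
  refine Nat.le_of_mul_le_mul_left ?_ (show 0 < (j+1)*(d+1) by positivity)
  calc (j+1)*(d+1) * (Nat.choose (j+1+d) j * (j+1+e) ^ j * (d+1+g) ^ (d+1) *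
          (Nat.choose (j+1+e) (j+1) * Nat.choose (d+1+g) d))
      = (Nat.choose (j+1+e) (j+1) * (j+1)) *
          ((d+1) * (Nat.choose (j+1+d) j * (j+1+e) ^ j * (d+1+g) ^ (d+1) * Nat.choose (d+1+g) d)) := by
        ring
    _ = (Nat.choose (j+1+e) j * (e+1)) *
          ((d+1) * (Nat.choose (j+1+d) j * (j+1+e) ^ j * (d+1+g) ^ (d+1) * Nat.choose (d+1+g) d)) := by
        rw [e1]
    _ = (Nat.choose (j+1+d) j * Nat.choose (j+1+e) j * Nat.choose (d+1+g) d *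
          (j+1+e) ^ j * (d+1+g) ^ d * (d+1)) * ((d+1+g) * (e+1)) := by
        rw [pow_succ]; ring
    _ ≤ (Nat.choose (j+1+d) j * Nat.choose (j+1+e) j * Nat.choose (d+1+g) d *
          (j+1+e) ^ j * (d+1+g) ^ d * (d+1)) * ((j+1+e) * (g+1)) := by
        exact Nat.mul_le_mul_left _ scal
    _ = (Nat.choose (j+1+d) j * (d+1)) *
          ((Nat.choose (d+1+g) d * (g+1)) * ((j+1+e) ^ (j+1) * (d+1+g) ^ d * Nat.choose (j+1+e) j)) := by
        rw [pow_succ]; ring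
    _ = (Nat.choose (j+1+d) (j+1) * (j+1)) *
          ((Nat.choose (d+1+g) (d+1) * (d+1)) * ((j+1+e) ^ (j+1) * (d+1+g) ^ d * Nat.choose (j+1+e) j)) := by
        rw [e2, e3]
    _ = (j+1)*(d+1) * (Nat.choose (j+1+d) (j+1) * (j+1+e) ^ (j+1) * (d+1+g) ^ d *
          (Nat.choose (j+1+e) j * Nat.choose (d+1+g) (d+1))) := by
        ring

lemma consec (n i k j : ℕ) (hn : 0 < n) (hi2 : i ≤ n) (hk2 : k ≤ n)
    (hjk : j + 1 ≤ k) (hji : j + 1 ≤ i) (hnk : i * k ≤ n * j) :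
    binPMF k ((i:ℝ)/n) j * hypPMF n i k (j+1) ≤ binPMF k ((i:ℝ)/n) (j+1) * hypPMF n i k j := by
  have hkni : k ≤ (n - i) + j := tail_k_le n i k j hn hi2 hk2 hnk
  rw [binPMF_eq n i k j hi2 hn (by omega), binPMF_eq n i k (j+1) hi2 hn hjk]
  unfold hypPMF
  rw [div_mul_div_comm, div_mul_div_comm]
  have hden : (0:ℝ) < (n:ℝ)^k * (Nat.choose n k : ℝ) := by
    have h1 : (0:ℝ) < (n:ℝ) := by exact_mod_cast hn
    have h2 : 0 < Nat.choose n k := Nat.choose_pos hk2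
    have h2' : (0:ℝ) < (Nat.choose n k : ℝ) := by exact_mod_cast h2
    positivity
  rw [div_le_div_iff_of_pos_right hden]
  have h := keyNat n i k j hjk hji hkni hnk hi2
  have h' : ((Nat.choose k j * i ^ j * (n - i) ^ (k - j) *
      (Nat.choose i (j + 1) * Nat.choose (n - i) (k - (j + 1))) : ℕ) : ℝ) ≤
      ((Nat.choose k (j + 1) * i ^ (j + 1) * (n - i) ^ (k - (j + 1)) *
      (Nat.choose i j * Nat.choose (n - i) (k - j)) : ℕ) : ℝ) := by exact_mod_cast h
  push_cast at h'
  nlinarith [h']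

lemma cross (n i k : ℕ) (hn : 0 < n) (hi1 : 1 ≤ i) (hi2 : i ≤ n) (hk2 : k ≤ n)
    (j' j : ℕ) (hj' : i * k ≤ n * j') (hjk : j ≤ k) (hle : j' ≤ j) :
    binPMF k ((i:ℝ)/n) j' * hypPMF n i k j ≤ binPMF k ((i:ℝ)/n) j * hypPMF n i k j' := by
  have hp0 : (0:ℝ) ≤ (i:ℝ)/n := by positivity
  have hp1 : (i:ℝ)/n ≤ 1 := by
    rw [div_le_one (by exact_mod_cast hn)]; exact_mod_cast hi2
  induction j, hle using Nat.le_induction with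
  | base => exact le_rfl
  | succ j hle ih =>
    have hjk1 : j + 1 ≤ k := hjk
    have hnkj : i * k ≤ n * j := le_trans hj' (Nat.mul_le_mul_left n hle)
    have ihh := ih (by omega)
    by_cases hz : hypPMF n i k (j+1) = 0
    · rw [hz]
      have : (0:ℝ) ≤ binPMF k ((i:ℝ)/n) (j+1) * hypPMF n i k j' :=
        mul_nonneg (binPMF_nonneg _ _ hp0 hp1) (hypPMF_nonneg _ _ _ _)
      linarith [this, mul_nonneg (binPMF_nonneg (p := (i:ℝ)/n) k j' hp0 hp1) (le_of_eq rfl : (0:ℝ) ≤ 0)]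
    · have hji : j + 1 ≤ i := by
        by_contra hc
        apply hz
        unfold hypPMF
        rw [Nat.choose_eq_zero_of_lt (by omega)]
        simp
      have hkni : k ≤ (n - i) + j := tail_k_le n i k j hn hi2 hk2 hnkj
      have hinlt : i < n := by omega
      have hj_pos : 0 < hypPMF n i k j :=
        hypPMF_pos n i k j (by omega) (by omega) hk2
      have hb_pos : 0 < binPMF k ((i:ℝ)/n) j := by
        apply binPMF_pos k j _ _ (by omega)
        · positivity
        · rw [div_lt_one (by exact_mod_cast hn)]; exact_mod_cast hinlt
      have hcons := consec n i k j hn hi2 hk2 hjk1 hji hnkj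
      have h1 : 0 ≤ hypPMF n i k (j+1) := hypPMF_nonneg _ _ _ _
      have h2 : 0 ≤ hypPMF n i k j' := hypPMF_nonneg _ _ _ _
      have h3 : 0 ≤ binPMF k ((i:ℝ)/n) j' := binPMF_nonneg _ _ hp0 hp1
      have key : (binPMF k ((i:ℝ)/n) j' * hypPMF n i k (j+1)) * hypPMF n i k j
          ≤ (binPMF k ((i:ℝ)/n) (j+1) * hypPMF n i k j') * hypPMF n i k j := by
        nlinarith [mul_le_mul_of_nonneg_right ihh h1, mul_le_mul_of_nonneg_right hcons h2]
      exact le_of_mul_le_mul_right key hj_pos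

lemma cheby (s : Finset ℕ) (f g : ℕ → ℝ)
    (hcross : ∀ j' ∈ s, ∀ j ∈ s, j' ≤ j → g j' * f j ≤ g j * f j') :
    (∑ j ∈ s, (j:ℝ) * f j) * (∑ j ∈ s, g j) ≤ (∑ j ∈ s, (j:ℝ) * g j) * (∑ j ∈ s, f j) := by
  have key : 0 ≤ ∑ j ∈ s, ∑ j' ∈ s, ((j:ℝ) - (j':ℝ)) * (g j * f j' - g j' * f j) := by
    refine Finset.sum_nonneg fun j hj => Finset.sum_nonneg fun j' hj' => ?_
    rcases le_total j' j with h | h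
    · have h1 := hcross j' hj' j hj h
      have h2 : ((j':ℝ)) ≤ (j:ℝ) := Nat.cast_le.mpr h
      nlinarith
    · have h1 := hcross j hj j' hj' h
      have h2 : ((j:ℝ)) ≤ (j':ℝ) := Nat.cast_le.mpr h
      nlinarith
  have expand : ∑ j ∈ s, ∑ j' ∈ s, ((j:ℝ) - (j':ℝ)) * (g j * f j' - g j' * f j)
      = 2 * ((∑ j ∈ s, (j:ℝ) * g j) * (∑ j ∈ s, f j) - (∑ j ∈ s, (j:ℝ) * f j) * (∑ j ∈ s, g j)) := by
    have step : ∀ j ∈ s, ∑ j' ∈ s, ((j:ℝ) - (j':ℝ)) * (g j * f j' - g j' * f j)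
        = ((j:ℝ) * g j) * (∑ j' ∈ s, f j') - ((j:ℝ) * f j) * (∑ j' ∈ s, g j')
          + (f j * (∑ j' ∈ s, (j':ℝ) * g j') - g j * (∑ j' ∈ s, (j':ℝ) * f j')) := by
      intro j _
      rw [Finset.mul_sum, Finset.mul_sum, Finset.mul_sum, Finset.mul_sum,
        ← Finset.sum_sub_distrib, ← Finset.sum_sub_distrib, ← Finset.sum_add_distrib]
      exact Finset.sum_congr rfl fun j' _ => by ring
    rw [Finset.sum_congr rfl step]
    rw [Finset.sum_add_distrib, Finset.sum_sub_distrib, Finset.sum_sub_distrib,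
      ← Finset.sum_mul, ← Finset.sum_mul, ← Finset.sum_mul, ← Finset.sum_mul]
    ring
  linarith

/-- Let `H ~ Hyp(n,i,k)` and `X ~ Bin(k, i/n)`, so that `E(H) = E(X) = i·k/n`.
Then `E(H | H ≥ E(H)) ≤ E(X | X ≥ E(X))`. -/
theorem hyp_tce_le_bin_tce (n i k : ℕ) (hn : 0 < n)
    (hi1 : 1 ≤ i) (hi2 : i ≤ n) (hk1 : 1 ≤ k) (hk2 : k ≤ n) :
    hypTCE n i k ((i : ℝ) * k / n) ≤ binTCE k ((i : ℝ) / n) ((i : ℝ) * k / n) := by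
  have hn' : (0:ℝ) < n := by exact_mod_cast hn
  set t : ℝ := (i:ℝ) * k / n with ht
  set p : ℝ := (i:ℝ) / n with hp
  have hp0 : (0:ℝ) ≤ p := by positivity
  have hp1 : p ≤ 1 := by
    rw [hp, div_le_one hn']; exact_mod_cast hi2
  set F : ℕ → ℝ := fun j => if t ≤ (j:ℝ) then hypPMF n i k j else 0 with hF
  set G : ℕ → ℝ := fun j => if t ≤ (j:ℝ) then binPMF k p j else 0 with hG
  have hFnn : ∀ j, 0 ≤ F j := by
    intro j; rw [hF]; dsimp only; split
    · exact hypPMF_nonneg _ _ _ _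
    · exact le_rfl
  have hGnn : ∀ j, 0 ≤ G j := by
    intro j; rw [hG]; dsimp only; split
    · exact binPMF_nonneg _ _ hp0 hp1
    · exact le_rfl
  -- tail membership transfer
  have tail_iff : ∀ j : ℕ, t ≤ (j:ℝ) → i * k ≤ n * j := by
    intro j hj
    rw [ht, div_le_iff₀ hn'] at hj
    have : ((i*k : ℕ):ℝ) ≤ ((j*n : ℕ):ℝ) := by push_cast; nlinarith [hj]
    have h2 := Nat.cast_le.mp this
    rwa [Nat.mul_comm j n] at h2
  -- denominators positive
  have hDh : 0 < ∑ j ∈ Finset.range (k+1), F j := by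
    apply Finset.sum_pos' (fun j _ => hFnn j)
    refine ⟨min i k, Finset.mem_range.mpr (by omega), ?_⟩
    have htle : t ≤ ((min i k : ℕ):ℝ) := by
      rw [ht, div_le_iff₀ hn']
      have hnat : i * k ≤ (min i k) * n := by
        rcases le_total i k with h | h
        · rw [min_eq_left h]; exact Nat.mul_le_mul_left i hk2
        · rw [min_eq_right h]
          calc i * k ≤ n * k := Nat.mul_le_mul_right k hi2
            _ = k * n := Nat.mul_comm n k
      calc (i:ℝ) * k = ((i*k : ℕ):ℝ) := by push_cast; ring
        _ ≤ (((min i k) * n : ℕ):ℝ) := by exact_mod_cast hnat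
        _ = ((min i k : ℕ):ℝ) * n := by push_cast; ring
    rw [hF]; dsimp only
    rw [if_pos htle]
    exact hypPMF_pos n i k (min i k) (by omega) (by omega) hk2
  have hDb : 0 < ∑ j ∈ Finset.range (k+1), G j := by
    apply Finset.sum_pos' (fun j _ => hGnn j)
    refine ⟨k, Finset.mem_range.mpr (by omega), ?_⟩
    have htle : t ≤ ((k : ℕ):ℝ) := by
      rw [ht, div_le_iff₀ hn']
      have : (i:ℝ) ≤ n := by exact_mod_cast hi2
      nlinarith [this, (show (0:ℝ) ≤ (k:ℝ) by positivity)]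
    rw [hG]; dsimp only
    rw [if_pos htle]
    unfold binPMF
    rw [Nat.choose_self, Nat.sub_self]
    have hppos : 0 < p := by rw [hp]; positivity
    simp
    positivity
  -- rewrite numerators
  have eH : (∑ j ∈ Finset.range (k+1), if t ≤ (j:ℝ) then (j:ℝ) * hypPMF n i k j else 0)
      = ∑ j ∈ Finset.range (k+1), (j:ℝ) * F j := by
    refine Finset.sum_congr rfl fun j _ => ?_
    rw [hF]; dsimp only; split <;> simp
  have eB : (∑ j ∈ Finset.range (k+1), if t ≤ (j:ℝ) then (j:ℝ) * binPMF k p j else 0)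
      = ∑ j ∈ Finset.range (k+1), (j:ℝ) * G j := by
    refine Finset.sum_congr rfl fun j _ => ?_
    rw [hG]; dsimp only; split <;> simp
  unfold hypTCE binTCE
  rw [eH, eB]
  rw [div_le_div_iff₀ hDh hDb]
  apply cheby
  intro j' hj' j hj hle
  rw [hF, hG]; dsimp only
  by_cases hc : t ≤ (j':ℝ)
  · have hcj : t ≤ (j:ℝ) := le_trans hc (by exact_mod_cast hle)
    rw [if_pos hc, if_pos hcj, if_pos hc, if_pos hcj]
    exact cross n i k hn hi1 hi2 hk2 j' j (tail_iff j' hc) (by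
      have := Finset.mem_range.mp hj; omega) hle
  · rw [if_neg hc, if_neg hc]
    simp
end

section
/- Let n, k be positive integers with n ≥ 8k and let i ∈ {1,...,n} be such that k·(i/n)·((n−i)/n) < 1 and i < n/2. If H ~ Hyp(n,i,k), then P(H ≥ i·k/n) ≥ k/n. -/
set_option maxHeartbeats 1000000

open Finset

private lemma choose_mul_pow_le' (a n : ℕ) (ha : a ≤ n) : ∀ k, a.choose k * n ^ k ≤ n.choose k * a ^ k := by
  intro k
  induction k with
  | zero => simp
  | succ k ih =>
    have key : (a - k) * n ≤ (n - k) * a := by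
      rcases Nat.le_total a k with h | h
      · simp [Nat.sub_eq_zero_of_le h]
      · rw [Nat.sub_mul, Nat.sub_mul, mul_comm n a]
        exact Nat.sub_le_sub_left (Nat.mul_le_mul_left k ha) _
    have h1 : a.choose (k+1) * (k+1) * n ^ (k+1) ≤ n.choose (k+1) * (k+1) * a ^ (k+1) := by
      rw [Nat.choose_succ_right_eq, Nat.choose_succ_right_eq, pow_succ, pow_succ]
      calc a.choose k * (a - k) * (n ^ k * n) = (a.choose k * n ^ k) * ((a - k) * n) := by ring
        _ ≤ (n.choose k * a ^ k) * ((n - k) * a) := Nat.mul_le_mul ih key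
        _ = n.choose k * (n - k) * (a ^ k * a) := by ring
    have h2 : a.choose (k+1) * n ^ (k+1) * (k+1) ≤ n.choose (k+1) * a ^ (k+1) * (k+1) := by
      calc a.choose (k+1) * n ^ (k+1) * (k+1) = a.choose (k+1) * (k+1) * n ^ (k+1) := by ring
        _ ≤ n.choose (k+1) * (k+1) * a ^ (k+1) := h1
        _ = n.choose (k+1) * a ^ (k+1) * (k+1) := by ring
    exact Nat.le_of_mul_le_mul_right h2 (Nat.succ_pos k)

private lemma cubic_le_exp' {y : ℝ} (hy : 0 ≤ y) : 1 + y + y^2/2 + y^3/6 ≤ Real.exp y := by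
  have := Real.sum_le_exp_of_nonneg hy 4
  rw [Finset.sum_range_succ, Finset.sum_range_succ, Finset.sum_range_succ, Finset.sum_range_succ] at this
  norm_num [Nat.factorial] at this
  linarith

private lemma vandermonde_range' (n i k : ℕ) (hi : i ≤ n) :
    ∑ j ∈ Finset.range (k+1), i.choose j * (n-i).choose (k-j) = n.choose k := by
  have := Nat.add_choose_eq i (n - i) k
  rw [Nat.add_sub_cancel' hi] at this
  rw [this, Finset.Nat.sum_antidiagonal_eq_sum_range_succ_mk]

private lemma keyB (k : ℕ) (hk3 : 3 ≤ k) (x y : ℝ) (hx2 : x < 1/2) (hxy : y = k * x)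
    (hy1 : 1 ≤ y) (hy2 : y ≤ 2) : (1-x)^k * (1 + y/(7/8-x)) ≤ 7/8 := by
  have hk0 : (0:ℝ) < k := by positivity
  have hx0 : 0 < x := by
    by_contra h
    push_neg at h
    nlinarith
  have hd : (0:ℝ) < 7/8 - x := by linarith
  rcases le_or_gt k 7 with hk7 | hk8
  · -- small k : polynomial inequality
    have key : (1-x)^k * (7/8 + ((k:ℝ)-1)*x) ≤ 7/8 * (7/8 - x) := by
      have hxk : 1 ≤ (k:ℝ) * x := by rw [← hxy]; exact hy1
      interval_cases k
      · have h1 : 1/3 ≤ x := by push_cast at hxk ⊢; linarith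
        push_cast
        nlinarith [sq_nonneg (x-1/3), sq_nonneg (x-1/2), sq_nonneg x,
          mul_nonneg (sub_nonneg.2 h1) (sub_nonneg.2 hx2.le)]
      · have h1 : 1/4 ≤ x := by push_cast at hxk ⊢; linarith
        push_cast
        nlinarith [sq_nonneg (x-1/4), sq_nonneg (x-1/2),
          mul_nonneg (sub_nonneg.2 h1) (sub_nonneg.2 hx2.le), sq_nonneg ((x-1/4)*(x-1/2))]
      · have h1 : 1/5 ≤ x := by push_cast at hxk ⊢; linarith
        push_cast
        nlinarith [sq_nonneg (x-1/5), sq_nonneg (x-1/2),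
          mul_nonneg (sub_nonneg.2 h1) (sub_nonneg.2 hx2.le), sq_nonneg ((x-1/5)*(x-1/2))]
      · have h1 : 1/6 ≤ x := by push_cast at hxk ⊢; linarith
        have hx : (0:ℝ) ≤ 1 - x := by linarith
        have h12 : (0:ℝ) ≤ (x-1/6)*(1/2-x) := mul_nonneg (by linarith) (by linarith)
        push_cast
        nlinarith [mul_nonneg h12 (pow_nonneg hx 4), mul_nonneg h12 (pow_nonneg hx 2),
          mul_nonneg h12 (pow_nonneg hx 3), sq_nonneg ((x-1/6)*(x-1/2)),
          mul_nonneg (mul_nonneg h12 h12) (pow_nonneg hx 2), sq_nonneg (x-1/6), sq_nonneg (x-1/2)]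
      · have h1 : 1/7 ≤ x := by push_cast at hxk ⊢; linarith
        have hx : (0:ℝ) ≤ 1 - x := by linarith
        have h12 : (0:ℝ) ≤ (x-1/7)*(1/2-x) := mul_nonneg (by linarith) (by linarith)
        push_cast
        nlinarith [mul_nonneg h12 (pow_nonneg hx 5), mul_nonneg h12 (pow_nonneg hx 4),
          mul_nonneg h12 (pow_nonneg hx 3), mul_nonneg (mul_nonneg h12 h12) (pow_nonneg hx 3),
          mul_nonneg (mul_nonneg h12 h12) (pow_nonneg hx 2), sq_nonneg (x-1/7), sq_nonneg (x-1/2)]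
    have heq : 1 + y/(7/8-x) = (7/8 + ((k:ℝ)-1)*x) / (7/8-x) := by
      rw [eq_div_iff hd.ne', add_mul, div_mul_cancel₀ _ hd.ne', hxy]
      ring
    rw [heq, mul_div_assoc' , div_le_iff₀ hd]
    exact key
  · -- large k : exponential bound
    have hk8' : (8:ℝ) ≤ k := by exact_mod_cast hk8
    have hxy8 : 8 * x ≤ y := by
      rw [hxy]
      exact mul_le_mul_of_nonneg_right hk8' hx0.le
    have hr : (1-x)^k ≤ Real.exp (-y) := by
      have h1 : (1-x) ≤ Real.exp (-x) := by
        have := Real.add_one_le_exp (-x); linarith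
      have h2 : (1-x)^k ≤ (Real.exp (-x))^k := pow_le_pow_left₀ (by linarith) h1 k
      calc (1-x)^k ≤ (Real.exp (-x))^k := h2
        _ = Real.exp (-((k:ℝ) * x)) := by rw [← Real.exp_nat_mul]; ring_nf
        _ = Real.exp (-y) := by rw [hxy]
    have hcub : Real.exp (-y) ≤ 6/(6+6*y+3*y^2+y^3) := by
      have h1 : 1 + y + y^2/2 + y^3/6 ≤ Real.exp y := cubic_le_exp' (by linarith)
      have h2 : (0:ℝ) < 6+6*y+3*y^2+y^3 := by positivity
      rw [Real.exp_neg, le_div_iff₀ h2, inv_mul_eq_div, div_le_iff₀ (Real.exp_pos y)]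
      linarith
    have h7y : (0:ℝ) < 7 - y := by linarith
    have hfrac : 1 + y/(7/8-x) ≤ 7*(1+y)/(7-y) := by
      have hdx : (7-y)/8 ≤ 7/8 - x := by linarith
      have h1 : y/(7/8-x) ≤ y/((7-y)/8) :=
        div_le_div_of_nonneg_left (by linarith) (by linarith) hdx
      have h2 : y/((7-y)/8) = 8*y/(7-y) := by
        rw [div_div_eq_mul_div]
        ring
      have h3 : 1 + 8*y/(7-y) = 7*(1+y)/(7-y) := by
        field_simp
        ring
      rw [← h3, ← h2]
      linarith
    have hB : (1-x)^k * (1 + y/(7/8-x)) ≤ 6/(6+6*y+3*y^2+y^3) * (7*(1+y)/(7-y)) := by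
      apply mul_le_mul (hr.trans hcub) hfrac (by positivity) (by positivity)
    refine hB.trans ?_
    have hden : (0:ℝ) < 6+6*y+3*y^2+y^3 := by positivity
    rw [div_mul_div_comm, div_le_iff₀ (by positivity)]
    nlinarith [mul_nonneg (sub_nonneg.2 hy1) (sub_nonneg.2 hy2), sq_nonneg (y-1)]

/-- If `n ≥ 8k`, `i ∈ {1,…,n}`, `k·(i/n)·((n−i)/n) < 1` and `i < n/2`, then for
`H ~ Hyp(n,i,k)` one has `P(H ≥ i·k/n) ≥ k/n`. -/
theorem hyp_tail_ge_of_var_small_i_lt (n k i : ℕ) (hn : 0 < n) (hk : 0 < k)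
    (h8 : 8 * k ≤ n) (hi1 : 1 ≤ i) (hi2 : i ≤ n)
    (hvar : (k : ℝ) * ((i : ℝ) / n) * (((n : ℝ) - i) / n) < 1)
    (hhalf : 2 * i < n) :
    (k : ℝ) / n ≤ hypTail n i k ((i * k : ℝ) / n) := by
  have hN : (0:ℝ) < n := by exact_mod_cast hn
  have hkR : (0:ℝ) < k := by exact_mod_cast hk
  have hiR : (1:ℝ) ≤ i := by exact_mod_cast hi1
  have hinR : (i:ℝ) ≤ n := by exact_mod_cast hi2
  have hkn : k ≤ n := by omega
  have h8R : 8*(k:ℝ) ≤ n := by exact_mod_cast h8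
  have hhalfR : 2*(i:ℝ) < n := by exact_mod_cast hhalf
  have hCn : (0:ℝ) < (n.choose k : ℝ) := by exact_mod_cast Nat.choose_pos hkn
  have hcastni : ((n - i : ℕ) : ℝ) = (n:ℝ) - i := Nat.cast_sub hi2
  set μ : ℝ := ((i * k : ℝ) / n) with hμ
  have hμx : μ = (k:ℝ) * ((i:ℝ)/n) := by
    rw [hμ]; field_simp
  have hμpos : 0 < μ := by
    rw [hμx]; positivity
  have hμ2 : μ < 2 := by
    have hfact : (1:ℝ)/2 < ((n:ℝ) - i)/n := by
      rw [lt_div_iff₀ hN]; linarith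
    have hEpos : (0:ℝ) < (k:ℝ) * ((i:ℝ)/n) := by positivity
    have hmul := mul_lt_mul_of_pos_left hfact hEpos
    rw [hμx]
    linarith
  have hpmf_nonneg : ∀ j, 0 ≤ hypPMF n i k j := by
    intro j; unfold hypPMF; positivity
  have hterm_nonneg : ∀ j ∈ Finset.range (k+1), 0 ≤ (if μ ≤ (j:ℝ) then hypPMF n i k j else 0) := by
    intro j _
    split
    · exact hpmf_nonneg j
    · exact le_refl 0
  have hknle : (k:ℝ)/n ≤ 1/8 := by
    rw [div_le_div_iff₀ hN (by norm_num)]; linarith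
  -- p0
  have hp0 : hypPMF n i k 0 = ((n-i).choose k : ℝ) / (n.choose k : ℝ) := by
    unfold hypPMF; simp
  have hp0le : hypPMF n i k 0 ≤ (1 - (i:ℝ)/n)^k := by
    have hx1 : (1 - (i:ℝ)/n) = ((n:ℝ)-i)/n := by field_simp
    rw [hp0, hx1]
    have hnat := choose_mul_pow_le' (n-i) n (Nat.sub_le n i) k
    have hcast : ((n-i).choose k : ℝ) * (n:ℝ)^k ≤ (n.choose k : ℝ) * ((n:ℝ)-i)^k := by
      rw [← hcastni]
      exact_mod_cast hnat
    rw [div_pow, div_le_div_iff₀ hCn (by positivity)]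
    linarith
  -- total probability one
  have hsum : ∑ j ∈ Finset.range (k+1), hypPMF n i k j = 1 := by
    unfold hypPMF
    rw [← Finset.sum_div, div_eq_one_iff_eq hCn.ne']
    exact_mod_cast vandermonde_range' n i k hi2
  rcases eq_or_lt_of_le hi1 with hi1' | hi2'
  · -- i = 1 : single term j = 1
    have hi1'' : i = 1 := hi1'.symm
    subst hi1''
    have h1mem : 1 ∈ Finset.range (k+1) := by
      simp [Nat.lt_succ_iff, hk]
    have hle := Finset.single_le_sum hterm_nonneg h1mem
    have hμ1 : μ ≤ (1:ℝ) := by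
      rw [hμ]
      push_cast
      rw [one_mul, div_le_one hN]
      linarith
    rw [if_pos (by exact_mod_cast hμ1)] at hle
    refine le_trans ?_ hle
    -- hypPMF n 1 k 1 = k/n
    have hid := Nat.add_one_mul_choose_eq (n-1) (k-1)
    have hn1 : n - 1 + 1 = n := by omega
    have hk1 : k - 1 + 1 = k := by omega
    simp only [Nat.succ_eq_add_one, hn1, hk1] at hid
    have hidR : (n:ℝ) * ((n-1).choose (k-1) : ℝ) = (n.choose k : ℝ) * k := by
      exact_mod_cast hid
    unfold hypPMF
    rw [Nat.choose_one_right]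
    simp only [Nat.cast_one, one_mul]
    rw [div_le_div_iff₀ hN hCn]
    linarith [hidR]
  · -- i ≥ 2
    have hi2R : (2:ℝ) ≤ i := by exact_mod_cast hi2'
    rcases le_or_gt μ 1 with hμ1 | hμ1
    · -- tail = 1 - p0
      have htail : hypTail n i k μ = 1 - hypPMF n i k 0 := by
        unfold hypTail
        have hcongr : ∀ j ∈ Finset.range (k+1),
            (if μ ≤ (j:ℝ) then hypPMF n i k j else 0)
              = hypPMF n i k j - (if j = 0 then hypPMF n i k j else 0) := by
          intro j _
          rcases Nat.eq_zero_or_pos j with h0 | hpos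
          · subst h0
            simp [not_le.2 hμpos]
          · have hj1 : (1:ℝ) ≤ j := by exact_mod_cast hpos
            rw [if_pos (hμ1.trans hj1), if_neg (by omega)]
            ring
        rw [Finset.sum_congr rfl hcongr, Finset.sum_sub_distrib, hsum,
          Finset.sum_ite_eq' (Finset.range (k+1)) 0 (hypPMF n i k),
          if_pos (Finset.mem_range.2 (Nat.succ_pos k))]
      rw [htail]
      -- p0 ≤ 1/(1+μ)
      have hexpx : 1 - (i:ℝ)/n ≤ Real.exp (-((i:ℝ)/n)) := by
        have := Real.add_one_le_exp (-((i:ℝ)/n)); linarith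
      have hxnn : (0:ℝ) ≤ 1 - (i:ℝ)/n := by
        rw [sub_nonneg, div_le_one hN]; exact hinR
      have hpe : hypPMF n i k 0 ≤ Real.exp (-μ) := by
        calc hypPMF n i k 0 ≤ (1 - (i:ℝ)/n)^k := hp0le
          _ ≤ (Real.exp (-((i:ℝ)/n)))^k := pow_le_pow_left₀ hxnn hexpx k
          _ = Real.exp (-((k:ℝ) * ((i:ℝ)/n))) := by rw [← Real.exp_nat_mul]; ring_nf
          _ = Real.exp (-μ) := by rw [hμx]
      have h1p : hypPMF n i k 0 * (1+μ) ≤ 1 := by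
        have he1 : 1 + μ ≤ Real.exp μ := by
          have := Real.add_one_le_exp μ; linarith
        calc hypPMF n i k 0 * (1+μ) ≤ Real.exp (-μ) * Real.exp μ :=
              mul_le_mul hpe he1 (by linarith) (Real.exp_pos _).le
          _ = 1 := by rw [← Real.exp_add]; simp
      have h2k : 2*((k:ℝ)/n) ≤ μ := by
        rw [hμ, mul_div_assoc]
        exact mul_le_mul_of_nonneg_right hi2R (by positivity)
      have hknn : (0:ℝ) ≤ (k:ℝ)/n := by positivity
      nlinarith [h1p, mul_nonneg hknn (sub_nonneg.2 hμ1), hpmf_nonneg 0]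
    · -- 1 < μ < 2 : tail = 1 - p0 - p1
      have hk3 : 3 ≤ k := by
        by_contra h
        push_neg at h
        have hk2 : (k:ℝ) ≤ 2 := by exact_mod_cast Nat.lt_succ_iff.mp h
        have ha : μ ≤ 2 * ((i:ℝ)/n) := by
          rw [hμx]
          exact mul_le_mul_of_nonneg_right hk2 (by positivity)
        have hb : (i:ℝ)/n < 1/2 := by rw [div_lt_div_iff₀ hN (by norm_num)]; linarith
        linarith
      have htail : hypTail n i k μ = 1 - hypPMF n i k 0 - hypPMF n i k 1 := by
        unfold hypTail
        have hcongr : ∀ j ∈ Finset.range (k+1),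
            (if μ ≤ (j:ℝ) then hypPMF n i k j else 0)
              = hypPMF n i k j - (if j = 0 then hypPMF n i k j else 0)
                - (if j = 1 then hypPMF n i k j else 0) := by
          intro j _
          match j with
          | 0 => simp [not_le.2 hμpos]
          | 1 =>
            rw [if_neg (by push_cast; linarith), if_neg (by omega), if_pos rfl]
            ring
          | (m+2) =>
            have hj2 : (2:ℝ) ≤ ((m+2:ℕ):ℝ) := by push_cast; linarith
            rw [if_pos (le_trans hμ2.le hj2), if_neg (by omega), if_neg (by omega)]
            ring
        rw [Finset.sum_congr rfl hcongr, Finset.sum_sub_distrib, Finset.sum_sub_distrib, hsum,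
          Finset.sum_ite_eq' (Finset.range (k+1)) 0 (hypPMF n i k),
          Finset.sum_ite_eq' (Finset.range (k+1)) 1 (hypPMF n i k),
          if_pos (Finset.mem_range.2 (Nat.succ_pos k)),
          if_pos (Finset.mem_range.2 (by omega : 1 < k + 1))]
      rw [htail]
      -- bound p1
      set x : ℝ := (i:ℝ)/n with hxdef
      have hx2 : x < 1/2 := by rw [hxdef, div_lt_div_iff₀ hN (by norm_num)]; linarith
      have hx0 : 0 < x := by rw [hxdef]; positivity
      have hd78 : (0:ℝ) < 7/8 - x := by linarith
      have hmge : (4*k + 1 : ℕ) ≤ n - i := by omega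
      have hd1 : k - 1 ≤ n - i := by omega
      have hidn : (n-i).choose k * k = (n-i).choose (k-1) * ((n-i) - (k-1)) := by
        have hthis := Nat.choose_succ_right_eq (n-i) (k-1)
        have hk1' : k - 1 + 1 = k := by omega
        rwa [hk1'] at hthis
      have hdpos : 0 < (n-i) - (k-1) := by omega
      have hdR : (0:ℝ) < (((n-i) - (k-1) : ℕ) : ℝ) := by exact_mod_cast hdpos
      have hdcast : (((n-i) - (k-1) : ℕ) : ℝ) = (n:ℝ) - i - (k:ℝ) + 1 := by
        have h1 : ((n - i - (k-1) : ℕ) : ℝ) = ((n-i:ℕ):ℝ) - ((k-1:ℕ):ℝ) := Nat.cast_sub hd1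
        have h2 : ((k-1:ℕ):ℝ) = (k:ℝ) - 1 := by
          push_cast [Nat.cast_sub hk]
          ring
        rw [h1, h2, hcastni]; ring
      have hdge : (n:ℝ) * (7/8 - x) ≤ (((n-i) - (k-1) : ℕ) : ℝ) := by
        rw [hdcast, hxdef]
        have : (n:ℝ) * (7/8 - (i:ℝ)/n) = 7*(n:ℝ)/8 - i := by field_simp
        rw [this]
        linarith
      have hidnR : ((n-i).choose k : ℝ) * k = ((n-i).choose (k-1) : ℝ) * (((n-i) - (k-1) : ℕ) : ℝ) := by
        exact_mod_cast hidn
      have hp1 : hypPMF n i k 1 = (i:ℝ) * ((n-i).choose (k-1) : ℝ) / (n.choose k : ℝ) := by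
        unfold hypPMF
        rw [Nat.choose_one_right]
      have hp1le : hypPMF n i k 1 ≤ (1-x)^k * (μ/(7/8-x)) := by
        rw [hp1]
        have hq : ((n-i).choose (k-1) : ℝ) = ((n-i).choose k : ℝ) * k / (((n-i) - (k-1) : ℕ) : ℝ) := by
          rw [eq_div_iff hdR.ne']
          linarith [hidnR]
        rw [hq]
        have hA : (i:ℝ) * (((n-i).choose k : ℝ) * k / (((n-i) - (k-1) : ℕ) : ℝ)) / (n.choose k : ℝ)
            = ((i:ℝ) * k * (((n-i).choose k : ℝ) / (n.choose k : ℝ))) / (((n-i) - (k-1) : ℕ) : ℝ) := by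
          field_simp
        rw [hA]
        have hnum : (i:ℝ) * k * (((n-i).choose k : ℝ) / (n.choose k : ℝ)) ≤ (i:ℝ) * k * (1-x)^k := by
          apply mul_le_mul_of_nonneg_left _ (by positivity)
          rw [← hp0]
          exact hp0le
        have hxk : (0:ℝ) ≤ 1 - x := by rw [hxdef, sub_nonneg, div_le_one hN]; exact hinR
        have hstep : ((i:ℝ) * k * (((n-i).choose k : ℝ) / (n.choose k : ℝ))) / (((n-i) - (k-1) : ℕ) : ℝ)
            ≤ ((i:ℝ) * k * (1-x)^k) / ((n:ℝ) * (7/8 - x)) := by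
          apply div_le_div₀ (mul_nonneg (by positivity) (pow_nonneg hxk k)) hnum (mul_pos hN hd78) hdge
        refine hstep.trans (le_of_eq ?_)
        rw [hμ]
        field_simp
      -- combine
      have hsumB : hypPMF n i k 0 + hypPMF n i k 1 ≤ (1-x)^k * (1 + μ/(7/8-x)) := by
        have : (1-x)^k * (1 + μ/(7/8-x)) = (1-x)^k + (1-x)^k * (μ/(7/8-x)) := by ring
        rw [this]
        exact add_le_add hp0le hp1le
      have hkey := keyB k hk3 x μ hx2 (by rw [hμx, hxdef]) hμ1.le hμ2.le
      linarith [hsumB.trans hkey, hknle]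
end

section
/- Let A, B be real numbers with A ≥ 2 and B ≥ 1, and define f(x) = (1 + x/(A−x))^{A−x} · (1 − x/(B+x))^{B+x} for x ∈ [0,1]. Then f is decreasing on [0,1], and in particular f(x) ≥ f(1) = (1 + 1/(A−1))^{A−1} · (1 − 1/(B+1))^{B+1} ≥ 1/2 for all x ∈ [0,1]. -/
open Real Set

/-!
Both factors have the form `(1 + s / u) ^ u = exp (u * log (u + s) + negMulLog u)`. Along
`u = a - x`, `s = x` and `u = b + x`, `s = -x` the exponent of `f` has derivative
`log ((a - x) / a) - log ((b + x) / b) ≤ 0`. For fixed `s` the exponent of `(1 + s / u) ^ u`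
has `u`-derivative `-log y - (1 - y) ≥ 0` with `y = u / (u + s)`, so `(1 + s / u) ^ u` increases
in `u`; hence the two factors of `f 1` are at least their values `2` (at `s = 1`, `u = 1`) and
`1 / 4` (at `s = -1`, `u = 2`).
-/

lemma one_add_div_rpow_self_eq_exp {s u : ℝ} (hu : 0 < u) (hus : 0 < u + s) :
    (1 + s / u) ^ u = exp (u * log (u + s) + negMulLog u) := by
  have hbase : 1 + s / u = (u + s) / u := by field_simp
  rw [hbase, rpow_def_of_pos (div_pos hus hu), log_div hus.ne' hu.ne', negMulLog]
  ring_nf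

lemma monotoneOn_one_add_div_rpow_self (s : ℝ) :
    MonotoneOn (fun u : ℝ => (1 + s / u) ^ u) (Ioi (max 0 (-s))) := by
  have pos {u : ℝ} (hu : u ∈ Ioi (max 0 (-s))) : 0 < u ∧ 0 < u + s := by
    obtain ⟨hu, hus⟩ := max_lt_iff.1 (mem_Ioi.1 hu)
    exact ⟨hu, by linarith⟩
  have hderiv {u : ℝ} (hu : 0 < u) (hus : 0 < u + s) :
      HasDerivAt (fun u => u * log (u + s) + negMulLog u)
        (log (u + s) + u / (u + s) + (-log u - 1)) u := by
    have hlog := ((hasDerivAt_id' u).add_const s).log hus.ne'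
    exact (((hasDerivAt_id' u).fun_mul hlog).fun_add (hasDerivAt_negMulLog hu.ne')).congr_deriv
      (by ring)
  have hexponent : MonotoneOn (fun u => u * log (u + s) + negMulLog u) (Ioi (max 0 (-s))) := by
    refine monotoneOn_of_hasDerivWithinAt_nonneg (convex_Ioi _)
      (fun u hu => (hderiv (pos hu).1 (pos hu).2).continuousAt.continuousWithinAt)
      (fun u hu => (hderiv (pos (interior_subset hu)).1
        (pos (interior_subset hu)).2).hasDerivWithinAt)
      fun u hu => ?_
    obtain ⟨hu, hus⟩ := pos (interior_subset hu)
    have hlog := log_le_sub_one_of_pos (div_pos hu hus)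
    rw [log_div hu.ne' hus.ne'] at hlog
    linarith
  exact (exp_monotone.comp_monotoneOn hexponent).congr fun u hu =>
    (one_add_div_rpow_self_eq_exp (pos hu).1 (pos hu).2).symm

lemma antitoneOn_one_add_div_rpow_mul_one_sub_div_rpow {a b : ℝ} (ha : 0 < a) (hb : 0 < b) :
    AntitoneOn (fun x : ℝ => (1 + x / (a - x)) ^ (a - x) * (1 - x / (b + x)) ^ (b + x))
      (Ico 0 a) := by
  have pos {x : ℝ} (hx : x ∈ Ico 0 a) : 0 < a - x ∧ 0 < b + x :=
    ⟨by linarith [hx.2], by linarith [hx.1]⟩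
  have hderiv {x : ℝ} (hax : 0 < a - x) (hbx : 0 < b + x) :
      HasDerivAt
        (fun x => (a - x) * log a + negMulLog (a - x) + ((b + x) * log b + negMulLog (b + x)))
        (log (a - x) - log a + (log b - log (b + x))) x := by
    have hax' := (hasDerivAt_id' x).const_sub a
    have hbx' := (hasDerivAt_id' x).const_add b
    exact (((hax'.mul_const (log a)).fun_add ((hasDerivAt_negMulLog hax.ne').comp x hax')).fun_add
      ((hbx'.mul_const (log b)).fun_add ((hasDerivAt_negMulLog hbx.ne').comp x hbx'))).congr_deriv
      (by ring)
  have hexponent : AntitoneOn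
      (fun x => (a - x) * log a + negMulLog (a - x) + ((b + x) * log b + negMulLog (b + x)))
      (Ico 0 a) := by
    refine antitoneOn_of_hasDerivWithinAt_nonpos (convex_Ico 0 a)
      (fun x hx => (hderiv (pos hx).1 (pos hx).2).continuousAt.continuousWithinAt)
      (fun x hx => (hderiv (pos (interior_subset hx)).1
        (pos (interior_subset hx)).2).hasDerivWithinAt)
      fun x hx => ?_
    rw [interior_Ico] at hx
    have hlog_a : log (a - x) ≤ log a := log_le_log (by linarith [hx.2]) (by linarith [hx.1])
    have hlog_b : log b ≤ log (b + x) := log_le_log hb (by linarith [hx.1])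
    linarith
  refine (exp_monotone.comp_antitoneOn hexponent).congr fun x hx => ?_
  obtain ⟨hax, hbx⟩ := pos hx
  have hfirst := one_add_div_rpow_self_eq_exp (s := x) hax (by linarith)
  have hsecond := one_add_div_rpow_self_eq_exp (s := -x) hbx (by linarith)
  rw [sub_add_cancel] at hfirst
  rw [add_neg_cancel_right, neg_div, ← sub_eq_add_neg] at hsecond
  simp only [Function.comp_apply, exp_add, hfirst, hsecond]

/-- For real `A ≥ 2` and `B ≥ 1`, the function
`f(x) = (1 + x/(A−x))^{A−x} · (1 − x/(B+x))^{B+x}` is decreasing on `[0,1]`;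
in particular `f(x) ≥ f(1) = (1 + 1/(A−1))^{A−1} · (1 − 1/(B+1))^{B+1} ≥ 1/2`
for all `x ∈ [0,1]`.  Powers are real (rpow) powers. -/
theorem f_antitone_and_ge_half (A B : ℝ) (hA : 2 ≤ A) (hB : 1 ≤ B)
    (f : ℝ → ℝ)
    (hf : ∀ x, f x = (1 + x / (A - x)) ^ (A - x) * (1 - x / (B + x)) ^ (B + x)) :
    AntitoneOn f (Set.Icc 0 1) ∧
      f 1 = (1 + 1 / (A - 1)) ^ (A - 1) * (1 - 1 / (B + 1)) ^ (B + 1) ∧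
      (1 : ℝ) / 2 ≤ f 1 ∧
      ∀ x ∈ Set.Icc (0 : ℝ) 1, f 1 ≤ f x := by
  obtain rfl : f = _ := funext hf
  have hanti : AntitoneOn _ (Icc (0 : ℝ) 1) :=
    (antitoneOn_one_add_div_rpow_mul_one_sub_div_rpow (by linarith) (by linarith)).mono
      (Icc_subset_Ico_right (by linarith : (1 : ℝ) < A))
  have hfirst : 2 ≤ (1 + 1 / (A - 1)) ^ (A - 1) :=
    calc (2 : ℝ) = (1 + 1 / 1) ^ (1 : ℝ) := by norm_num
      _ ≤ _ := monotoneOn_one_add_div_rpow_self 1 (by norm_num)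
        (show max 0 (-1) < A - 1 from max_lt_iff.2 ⟨by linarith, by linarith⟩) (by linarith)
  have hsecond : 1 / 4 ≤ (1 - 1 / (B + 1)) ^ (B + 1) :=
    calc (1 / 4 : ℝ) = (1 + -1 / 2) ^ (2 : ℝ) := by norm_num
      _ ≤ (1 + -1 / (B + 1)) ^ (B + 1) :=
        monotoneOn_one_add_div_rpow_self (-1) (by norm_num)
          (show max 0 (-(-1)) < B + 1 from max_lt_iff.2 ⟨by linarith, by linarith⟩)
          (by linarith)
      _ = _ := by rw [neg_div, ← sub_eq_add_neg]
  refine ⟨hanti, rfl, ?_, fun x hx => hanti hx ⟨zero_le_one, le_rfl⟩ hx.2⟩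
  calc (1 : ℝ) / 2 = 2 * (1 / 4) := by norm_num
    _ ≤ _ := mul_le_mul hfirst hsecond (by norm_num) (by positivity)
end
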